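/- arXiv:1809.03309 — 2 statements merged into one kernel-verified Lean document; each statement's English description precedes it below -/
import Mathlib

section
/- The general TIN-achievable GDoF region equals the union of all polyhedral TIN regions over all decoding orders and all subnetworks: P* = ∪_{π} ∪_{S ⊆ 𝒦} P_π(S), where the unions run over all decoding orders π and all subsets S of 𝒦. -/
open Finset

/-- The set of users `𝒦`: a cell `k : Fin K` together with a user index in `Fin (L k)`. -/
abbrev User {K : ℕ} (L : Fin K → ℕ) := (k : Fin K) × Fin (L k)

/-- The cyclically previous index in `Fin m` (i.e. `j - 1` modulo `m`). -/
def prevIdx {m : ℕ} (j : Fin m) : Fin m :=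
  ⟨(j.val + (m - 1)) % m, Nat.mod_lt _ j.pos⟩

/-- The cyclically next index in `Fin m` (i.e. `j + 1` modulo `m`). -/
def nextIdx {m : ℕ} (j : Fin m) : Fin m :=
  ⟨(j.val + 1) % m, Nat.mod_lt _ j.pos⟩

/-- The identity decoding order. -/
def idOrder {K : ℕ} (L : Fin K → ℕ) : (k : Fin K) → Equiv.Perm (Fin (L k)) :=
  fun _ => Equiv.refl _

/-- The term `max({0} ∪ {r_k^{[π_k(l')]} + α_{kk}^{[π_k(l')]} : l' < l, (π_k(l'),k) ∈ S}
∪ {r_j^{[l_j]} + α_{jk}^{[l_j]} : (l_j,j) ∈ S, j ≠ k})` in the polyhedral TIN constraints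
(expressed as a supremum of the corresponding finite nonempty set of reals). -/
noncomputable def innerMax {K : ℕ} (L : Fin K → ℕ)
    (α : (k : Fin K) → Fin (L k) → Fin K → ℝ)
    (π : (k : Fin K) → Equiv.Perm (Fin (L k)))
    (S : Set (User L)) (r : (k : Fin K) → Fin (L k) → ℝ)
    (k : Fin K) (l : Fin (L k)) : ℝ :=
  sSup (insert (0 : ℝ)
    ({x : ℝ | ∃ l' : Fin (L k), l' < l ∧ (⟨k, π k l'⟩ : User L) ∈ S ∧
        x = r k (π k l') + α k (π k l') k} ∪
     {x : ℝ | ∃ (j : Fin K) (lj : Fin (L j)), j ≠ k ∧ (⟨j, lj⟩ : User L) ∈ S ∧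
        x = r j lj + α j lj k}))

/-- The polyhedral TIN region `P_π(S)`: `d` is nonnegative, vanishes outside `S`, and is
realized by some power allocation `r ≤ 0` on `S`. -/
def polyTIN {K : ℕ} (L : Fin K → ℕ)
    (α : (k : Fin K) → Fin (L k) → Fin K → ℝ)
    (π : (k : Fin K) → Equiv.Perm (Fin (L k)))
    (S : Set (User L))
    (d : (k : Fin K) → Fin (L k) → ℝ) : Prop :=
  (∀ (k : Fin K) (l : Fin (L k)), 0 ≤ d k l) ∧
  (∀ (k : Fin K) (l : Fin (L k)), (⟨k, l⟩ : User L) ∉ S → d k l = 0) ∧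
  ∃ r : (k : Fin K) → Fin (L k) → ℝ,
    (∀ (k : Fin K) (l : Fin (L k)), (⟨k, l⟩ : User L) ∈ S → r k l ≤ 0) ∧
    (∀ (k : Fin K) (l : Fin (L k)), (⟨k, π k l⟩ : User L) ∈ S →
      d k (π k l) ≤ r k (π k l) + α k (π k l) k - innerMax L α π S r k l)

/-- The TIN-achievable region `P*_π` for decoding order `π`: as `P_π(𝒦)` but with the
positive part `max(0, ·)` of the upper bound. -/
def starTIN {K : ℕ} (L : Fin K → ℕ)
    (α : (k : Fin K) → Fin (L k) → Fin K → ℝ)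
    (π : (k : Fin K) → Equiv.Perm (Fin (L k)))
    (d : (k : Fin K) → Fin (L k) → ℝ) : Prop :=
  (∀ (k : Fin K) (l : Fin (L k)), 0 ≤ d k l) ∧
  ∃ r : (k : Fin K) → Fin (L k) → ℝ,
    (∀ (k : Fin K) (l : Fin (L k)), r k l ≤ 0) ∧
    (∀ (k : Fin K) (l : Fin (L k)),
      d k (π k l) ≤ max 0 (r k (π k l) + α k (π k l) k - innerMax L α π Set.univ r k l))

/-- The TIN cyclic system of GDoF inequalities for decoding order `π`:
(i) per-cell MAC-type bounds, and (ii) cyclic bounds over sequences of distinct cells. -/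
def cyclicSystem {K : ℕ} (L : Fin K → ℕ)
    (α : (k : Fin K) → Fin (L k) → Fin K → ℝ)
    (π : (k : Fin K) → Equiv.Perm (Fin (L k)))
    (d : (k : Fin K) → Fin (L k) → ℝ) : Prop :=
  (∀ (k : Fin K) (l : Fin (L k)),
      ∑ s ∈ Finset.Iic l, d k (π k s) ≤ α k (π k l) k) ∧
  (∀ m : ℕ, 2 ≤ m → m ≤ K → ∀ c : Fin m → Fin K, Function.Injective c →
    ∀ lsel : (j : Fin m) → Fin (L (c j)),
      ∑ j, (∑ s ∈ Finset.Iic (lsel j), d (c j) (π (c j) s)) ≤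
      ∑ j, (α (c j) (π (c j) (lsel j)) (c j) -
            α (c j) (π (c j) (lsel j)) (c (prevIdx j))))

/-!
For `d ∈ P*_π`, take `S` to be the support of `d`: on `S` the positive part is inactive, and
replacing `𝒦` by `S` in the interference term only lowers it, so the same allocation shows
`d ∈ P_π(S)`. Conversely, an allocation for `P_π(S)` extends to `𝒦` by giving every user
outside `S` the power `-∑ |α|`; such users are received below the noise floor at every cell,
so they never raise the `max` with `0`, and users outside `S` have `d = 0`.
-/

section InnerMax

variable {K : ℕ} {L : Fin K → ℕ} (α : (k : Fin K) → Fin (L k) → Fin K → ℝ)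
  (π : (k : Fin K) → Equiv.Perm (Fin (L k))) (S : Set (User L))
  (r : (k : Fin K) → Fin (L k) → ℝ) (k : Fin K) (l : Fin (L k))

theorem innerMax_le_iff {c : ℝ} :
    innerMax L α π S r k l ≤ c ↔ 0 ≤ c ∧
      (∀ l' < l, (⟨k, π k l'⟩ : User L) ∈ S → r k (π k l') + α k (π k l') k ≤ c) ∧
      (∀ (j : Fin K) (lj : Fin (L j)), j ≠ k → (⟨j, lj⟩ : User L) ∈ S →
        r j lj + α j lj k ≤ c) := by
  have hfin : (insert (0 : ℝ)
      ({x : ℝ | ∃ l' : Fin (L k), l' < l ∧ (⟨k, π k l'⟩ : User L) ∈ S ∧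
          x = r k (π k l') + α k (π k l') k} ∪
       {x : ℝ | ∃ (j : Fin K) (lj : Fin (L j)), j ≠ k ∧ (⟨j, lj⟩ : User L) ∈ S ∧
          x = r j lj + α j lj k})).Finite := by
    refine .insert _ (.union ?_ ?_)
    · refine (Set.finite_range fun l' => r k (π k l') + α k (π k l') k).subset ?_
      rintro x ⟨l', -, -, rfl⟩
      exact ⟨l', rfl⟩
    · refine (Set.finite_range fun u : User L => r u.1 u.2 + α u.1 u.2 k).subset ?_
      rintro x ⟨j, lj, -, -, rfl⟩
      exact ⟨⟨j, lj⟩, rfl⟩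
  rw [innerMax, csSup_le_iff hfin.bddAbove (Set.insert_nonempty _ _)]
  simp only [Set.mem_insert_iff, Set.mem_union, forall_eq_or_imp]
  grind

theorem innerMax_nonneg : 0 ≤ innerMax L α π S r k l :=
  ((innerMax_le_iff α π S r k l).1 le_rfl).1

theorem le_innerMax_of_lt {l' : Fin (L k)} (hl' : l' < l) (hS : (⟨k, π k l'⟩ : User L) ∈ S) :
    r k (π k l') + α k (π k l') k ≤ innerMax L α π S r k l :=
  ((innerMax_le_iff α π S r k l).1 le_rfl).2.1 l' hl' hS

theorem le_innerMax_of_ne {j : Fin K} (lj : Fin (L j)) (hj : j ≠ k)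
    (hS : (⟨j, lj⟩ : User L) ∈ S) : r j lj + α j lj k ≤ innerMax L α π S r k l :=
  ((innerMax_le_iff α π S r k l).1 le_rfl).2.2 j lj hj hS

variable {S} in
theorem innerMax_mono {T : Set (User L)} (hST : S ⊆ T) :
    innerMax L α π S r k l ≤ innerMax L α π T r k l :=
  (innerMax_le_iff α π S r k l).2
    ⟨innerMax_nonneg α π T r k l,
      fun _ hl' hS => le_innerMax_of_lt α π T r k l hl' (hST hS),
      fun _ lj hj hS => le_innerMax_of_ne α π T r k l lj hj (hST hS)⟩

theorem innerMax_univ_le_of_eqOn {r' : (k : Fin K) → Fin (L k) → ℝ}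
    (heq : ∀ (j : Fin K) (lj : Fin (L j)), (⟨j, lj⟩ : User L) ∈ S → r' j lj = r j lj)
    (hneg : ∀ (j : Fin K) (lj : Fin (L j)), (⟨j, lj⟩ : User L) ∉ S →
      r' j lj + α j lj k ≤ 0) :
    innerMax L α π Set.univ r' k l ≤ innerMax L α π S r k l := by
  have hnonneg := innerMax_nonneg α π S r k l
  refine (innerMax_le_iff α π Set.univ r' k l).2
    ⟨hnonneg, fun l' hl' _ => ?_, fun j lj hj _ => ?_⟩
  · by_cases hS : (⟨k, π k l'⟩ : User L) ∈ S
    · rw [heq _ _ hS]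
      exact le_innerMax_of_lt α π S r k l hl' hS
    · exact (hneg _ _ hS).trans hnonneg
  · by_cases hS : (⟨j, lj⟩ : User L) ∈ S
    · rw [heq _ _ hS]
      exact le_innerMax_of_ne α π S r k l lj hj hS
    · exact (hneg _ _ hS).trans hnonneg

end InnerMax

section Regions

variable {K : ℕ} {L : Fin K → ℕ} {α : (k : Fin K) → Fin (L k) → Fin K → ℝ}
  {π : (k : Fin K) → Equiv.Perm (Fin (L k))} {d : (k : Fin K) → Fin (L k) → ℝ}

theorem polyTIN_support_of_starTIN (h : starTIN L α π d) :
    polyTIN L α π {u | 0 < d u.1 u.2} d := by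
  obtain ⟨hnonneg, r, hr, hd⟩ := h
  refine ⟨hnonneg, fun k l hl => le_antisymm (not_lt.1 hl) (hnonneg k l), r,
    fun k l _ => hr k l, fun k l hpos => ?_⟩
  have hshrink := innerMax_mono α π r k l (Set.subset_univ {u : User L | 0 < d u.1 u.2})
  have hpos : 0 < d k (π k l) := hpos
  rcases le_max_iff.1 (hd k l) with hzero | hbound <;> linarith

theorem starTIN_of_polyTIN {S : Set (User L)} (h : polyTIN L α π S d) : starTIN L α π d := by
  classical
  obtain ⟨hnonneg, hzero, r, hr, hd⟩ := h
  set c : ℝ := ∑ p : User L × Fin K, |α p.1.1 p.1.2 p.2|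
  have hα_le : ∀ (j : Fin K) (lj : Fin (L j)) (i : Fin K), α j lj i ≤ c := fun j lj i =>
    (le_abs_self _).trans <| Finset.single_le_sum (f := fun p : User L × Fin K =>
      |α p.1.1 p.1.2 p.2|) (fun _ _ => abs_nonneg _) (Finset.mem_univ (⟨j, lj⟩, i))
  let r' : (k : Fin K) → Fin (L k) → ℝ := fun j lj =>
    if (⟨j, lj⟩ : User L) ∈ S then r j lj else -c
  have heq : ∀ (j : Fin K) (lj : Fin (L j)), (⟨j, lj⟩ : User L) ∈ S → r' j lj = r j lj :=
    fun j lj hS => if_pos hS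
  have hoff : ∀ (j : Fin K) (lj : Fin (L j)), (⟨j, lj⟩ : User L) ∉ S → r' j lj = -c :=
    fun j lj hS => if_neg hS
  have hc : 0 ≤ c := Finset.sum_nonneg fun _ _ => abs_nonneg _
  refine ⟨hnonneg, r', fun j lj => ?_, fun k l => ?_⟩
  · by_cases hS : (⟨j, lj⟩ : User L) ∈ S
    · exact (heq j lj hS).trans_le (hr j lj hS)
    · rw [hoff j lj hS]
      linarith
  · by_cases hS : (⟨k, π k l⟩ : User L) ∈ S
    · have hinterference := innerMax_univ_le_of_eqOn α π S r k l heq fun j lj hS' => by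
        rw [hoff j lj hS']
        linarith [hα_le j lj k]
      refine le_max_of_le_right ?_
      rw [heq _ _ hS]
      linarith [hd k l hS]
    · rw [hzero k (π k l) hS]
      exact le_max_left _ _

end Regions

theorem starTIN_eq_union_polyTIN_general {K : ℕ}
    (L : Fin K → ℕ)
    (α : (k : Fin K) → Fin (L k) → Fin K → ℝ) :
    {d : (k : Fin K) → Fin (L k) → ℝ |
        ∃ π : (k : Fin K) → Equiv.Perm (Fin (L k)), starTIN L α π d} =
    {d : (k : Fin K) → Fin (L k) → ℝ |
        ∃ (π : (k : Fin K) → Equiv.Perm (Fin (L k))) (S : Set (User L)),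
          polyTIN L α π S d} := by
  ext d
  constructor
  · rintro ⟨π, h⟩
    exact ⟨π, _, polyTIN_support_of_starTIN h⟩
  · rintro ⟨π, S, h⟩
    exact ⟨π, starTIN_of_polyTIN h⟩

/-- **Theorem 2 (general TIN-achievable GDoF region).**
The general TIN-achievable GDoF region `P* = ∪_π P*_π` equals the union, over all decoding
orders `π` and all subnetworks `S ⊆ 𝒦`, of the polyhedral TIN regions `P_π(S)`. -/
theorem starTIN_eq_union_polyTIN {K : ℕ} (hK : 1 ≤ K)
    (L : Fin K → ℕ) (hL : ∀ k, 1 ≤ L k)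
    (α : (k : Fin K) → Fin (L k) → Fin K → ℝ)
    (hα : ∀ (k : Fin K) (l : Fin (L k)) (i : Fin K), 0 ≤ α k l i)
    (hmono : ∀ k : Fin K, Monotone (fun l : Fin (L k) => α k l k)) :
    {d : (k : Fin K) → Fin (L k) → ℝ |
        ∃ π : (k : Fin K) → Equiv.Perm (Fin (L k)), starTIN L α π d} =
    {d : (k : Fin K) → Fin (L k) → ℝ |
        ∃ (π : (k : Fin K) → Equiv.Perm (Fin (L k))) (S : Set (User L)),
          polyTIN L α π S d} :=
  starTIN_eq_union_polyTIN_general L α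
end

section
/- Assume the TIN-convexity condition (C2). For every nonempty M ⊊ {1,…,K}, every k ∈ {1,…,K} \ M, and every choice of indices l_i ∈ {1,…,L_i} for i ∈ M ∪ {k}: f_id(M,(l_i)_{i∈M}) ≤ f_id(M ∪ {k},(l_i)_{i∈M∪{k}}). -/
/-! Rotate a cyclic arrangement of `insert k M` so that `k` comes last, and delete `k`. Only two
terms of the cyclic sum change: the term of `k` itself, `α_kk − α_kP`, disappears, and the
successor `A` of `k` now sees `P`, the predecessor of `k`, instead of `k`. (C2) taken at
`i := k, j := P` and with `A` in the role of its `k` says exactly that this does not increase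
the sum. When `M = {P}`
is a singleton (so `A = P`), the same instance compares the two-cycle `(P, k)` with `α_PP`. -/

open Finset

/-- The cyclic sum `Σ_j (α_{i_j i_j}^{[π(l_{i_j})]} − α_{i_j i_{j−1}}^{[π(l_{i_j})]})`
associated with a cyclic arrangement `c` of cells. -/
noncomputable def cycVal {K : ℕ} (L : Fin K → ℕ)
    (α : (k : Fin K) → Fin (L k) → Fin K → ℝ)
    (π : (k : Fin K) → Equiv.Perm (Fin (L k)))
    {m : ℕ} (c : Fin m → Fin K) (lsel : (i : Fin K) → Fin (L i)) : ℝ :=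
  ∑ j, (α (c j) (π (c j) (lsel (c j))) (c j) -
        α (c j) (π (c j) (lsel (c j))) (c (prevIdx j)))

/-- The set function `f_π(M, (l_i)_{i∈M})`: for a singleton `M = {i}` it is
`α_{ii}^{[π_i(l_i)]}`; for `|M| ≥ 2` it is the minimum of the cyclic sums over all
cyclic arrangements of `M`. -/
noncomputable def fOrder {K : ℕ} (L : Fin K → ℕ)
    (α : (k : Fin K) → Fin (L k) → Fin K → ℝ)
    (π : (k : Fin K) → Equiv.Perm (Fin (L k)))
    (M : Finset (Fin K)) (lsel : (i : Fin K) → Fin (L i)) : ℝ :=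
  if M.card = 1 then ∑ i ∈ M, α i (π i (lsel i)) i
  else sInf {x : ℝ | ∃ c : Fin M.card → Fin K,
    Function.Injective c ∧ (∀ j, c j ∈ M) ∧ x = cycVal L α π c lsel}

open Function

lemma prevIdx_eq_sub_one {n : ℕ} (j : Fin (n + 1)) : prevIdx j = j - 1 := by
  ext
  rw [Fin.coe_sub_one]
  split_ifs with h
  · subst h; simp [prevIdx]
  · have : (j : ℕ) ≠ 0 := Fin.val_ne_of_ne h
    have : (j : ℕ) + n = (j - 1) + (n + 1) := by omega
    simp only [prevIdx, add_tsub_cancel_right, this, Nat.add_mod_right]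
    exact Nat.mod_eq_of_lt (by omega)

lemma prevIdx_zero {n : ℕ} : prevIdx (0 : Fin (n + 1)) = Fin.last n := by
  ext; simp [prevIdx]

lemma prevIdx_succ {n : ℕ} (j : Fin n) : prevIdx j.succ = j.castSucc := by
  ext; simp [prevIdx_eq_sub_one, Fin.coe_sub_one, Fin.succ_ne_zero]

section CyclicSum

variable {ι : Type*} (w : ι → ι → ℝ)

def cycSum {m : ℕ} (c : Fin m → ι) : ℝ :=
  ∑ j, (w (c j) (c j) - w (c j) (c (prevIdx j)))

lemma cycSum_comp_add_right {n : ℕ} (c : Fin (n + 1) → ι) (d : Fin (n + 1)) :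
    cycSum w (fun j => c (j + d)) = cycSum w c :=
  Fintype.sum_equiv (Equiv.addRight d) _ _ fun j => by
    simp [prevIdx_eq_sub_one, add_sub_right_comm]

lemma cycSum_snoc {n : ℕ} (c : Fin (n + 1) → ι) (x : ι) :
    cycSum w (Fin.snoc c x : Fin (n + 2) → ι) =
      cycSum w c + (w x x - w x (c (Fin.last n))) - (w (c 0) x - w (c 0) (c (Fin.last n))) := by
  have hprev : ∀ j : Fin n, prevIdx j.succ.castSucc = j.castSucc.castSucc := fun j => by
    rw [← Fin.succ_castSucc, prevIdx_succ]
  have hzero : prevIdx (0 : Fin (n + 1)).castSucc = Fin.last (n + 1) := by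
    rw [Fin.castSucc_zero, prevIdx_zero]
  have hlast : prevIdx (Fin.last (n + 1)) = (Fin.last n).castSucc := by
    rw [← Fin.succ_last, prevIdx_succ]
  unfold cycSum
  rw [Fin.sum_univ_castSucc, Fin.sum_univ_succ, Fin.sum_univ_succ (n := n)]
  simp only [Fin.snoc_castSucc, Fin.snoc_last, hprev, hzero, hlast, prevIdx_succ, prevIdx_zero]
  ring

lemma exists_cycSum_eq_cycSum_snoc {m : ℕ} (c : Fin (m + 1) → ι) (hc : Injective c) {x : ι}
    (hx : x ∈ Set.range c) :
    ∃ c' : Fin m → ι, Injective c' ∧ Set.range c' ⊆ Set.range c \ {x} ∧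
      cycSum w c = cycSum w (Fin.snoc c' x : Fin (m + 1) → ι) := by
  obtain ⟨j₀, rfl⟩ := hx
  set c₂ : Fin (m + 1) → ι := fun j => c (j + (j₀ - Fin.last m))
  have hc₂ : Injective c₂ := hc.comp (add_left_injective _)
  have hlast : c₂ (Fin.last m) = c j₀ := by
    simp only [c₂, add_sub_cancel]
  refine ⟨Fin.init c₂, hc₂.comp (Fin.castSucc_injective m), ?_, ?_⟩
  · rintro _ ⟨j, rfl⟩
    exact ⟨⟨_, rfl⟩, fun h => (Fin.castSucc_lt_last j).ne (hc₂ (h.trans hlast.symm))⟩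
  · rw [← hlast, Fin.snoc_init_self, cycSum_comp_add_right]

variable [DecidableEq ι]

/-- Condition (C2) for one fixed user in each cell, `w i j` being the strength of the user of
cell `i` at cell `j`. -/
def TINConvex : Prop :=
  ∀ i j, j ≠ i → ∀ k, k ≠ i → w i j + w k i - (if k = j then 0 else w k j) ≤ w i i

variable {w}

lemma TINConvex.cycSum_le_cycSum_snoc (hw : TINConvex w) {n : ℕ} (c : Fin (n + 2) → ι)
    (hc : Injective c) {x : ι} (hx : x ∉ Set.range c) :
    cycSum w c ≤ cycSum w (Fin.snoc c x : Fin (n + 3) → ι) := by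
  have hne : c 0 ≠ c (Fin.last (n + 1)) := hc.ne (Fin.last_pos).ne
  have := hw x (c (Fin.last _)) (fun h => hx ⟨_, h⟩) (c 0) (fun h => hx ⟨_, h⟩)
  rw [if_neg hne] at this
  rw [cycSum_snoc]
  linarith

lemma TINConvex.le_cycSum_snoc (hw : TINConvex w) (c : Fin 1 → ι) {x : ι} (hx : x ≠ c 0) :
    w (c 0) (c 0) ≤ cycSum w (Fin.snoc c x : Fin 2 → ι) := by
  have := hw x (c 0) hx.symm (c 0) hx.symm
  rw [if_pos rfl] at this
  have hc : cycSum w c = 0 := by simp [cycSum, Subsingleton.elim (prevIdx (0 : Fin 1)) 0]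
  rw [cycSum_snoc, hc, Fin.last_zero]
  linarith

end CyclicSum

section fOrder

variable {K : ℕ} (L : Fin K → ℕ) (α : (k : Fin K) → Fin (L k) → Fin K → ℝ)
  (π : (k : Fin K) → Equiv.Perm (Fin (L k))) (lsel : (i : Fin K) → Fin (L i))

def userWeight (i j : Fin K) : ℝ :=
  α i (π i (lsel i)) j

lemma fOrder_singleton (a : Fin K) : fOrder L α π {a} lsel = userWeight L α π lsel a a := by
  simp [fOrder, userWeight]

lemma fOrder_le_cycSum {M : Finset (Fin K)} (hM : M.card ≠ 1) {n : ℕ} (c : Fin n → Fin K)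
    (hn : n = M.card) (hc : Injective c) (hcM : ∀ j, c j ∈ M) :
    fOrder L α π M lsel ≤ cycSum (userWeight L α π lsel) c := by
  subst hn
  rw [fOrder, if_neg hM]
  refine csInf_le ?_ ⟨c, hc, hcM, rfl⟩
  refine (Set.finite_range fun c : Fin M.card → Fin K => cycVal L α π c lsel).bddBelow.mono ?_
  rintro _ ⟨c, -, -, rfl⟩
  exact ⟨c, rfl⟩

lemma le_fOrder_of_forall_le {M : Finset (Fin K)} (hM : M.card ≠ 1) {a : ℝ}
    (h : ∀ n (c : Fin n → Fin K), n = M.card → Injective c → (∀ j, c j ∈ M) →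
      a ≤ cycSum (userWeight L α π lsel) c) :
    a ≤ fOrder L α π M lsel := by
  rw [fOrder, if_neg hM]
  refine le_csInf ⟨_, _, Subtype.val_injective.comp M.equivFin.symm.injective,
    fun j => (M.equivFin.symm j).2, rfl⟩ ?_
  rintro _ ⟨c, hc, hcM, rfl⟩
  exact h _ c rfl hc hcM

lemma fOrder_le_cycSum_snoc (hw : TINConvex (userWeight L α π lsel)) {M : Finset (Fin K)}
    {k : Fin K} (hk : k ∉ M) {m : ℕ} (hm : M.card = m + 1) (c : Fin (m + 1) → Fin K)
    (hc : Injective c) (hcM : ∀ j, c j ∈ M) :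
    fOrder L α π M lsel ≤ cycSum (userWeight L α π lsel) (Fin.snoc c k : Fin (m + 2) → Fin K) := by
  have hkc : k ∉ Set.range c := fun ⟨j, hj⟩ => hk (hj ▸ hcM j)
  cases m with
  | zero =>
    obtain ⟨a, rfl⟩ := card_eq_one.mp hm
    obtain rfl : c 0 = a := mem_singleton.mp (hcM 0)
    rw [fOrder_singleton]
    exact hw.le_cycSum_snoc c fun h => hkc ⟨0, h.symm⟩
  | succ m =>
    exact (fOrder_le_cycSum L α π lsel (by omega) c hm.symm hc hcM).trans
      (hw.cycSum_le_cycSum_snoc c hc hkc)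

end fOrder

theorem fOrder_id_le_insert_general {K : ℕ}
    (L : Fin K → ℕ)
    (α : (k : Fin K) → Fin (L k) → Fin K → ℝ)
    (hC2 : ∀ (i : Fin K) (li : Fin (L i)) (j : Fin K), j ≠ i →
      ∀ (k : Fin K), k ≠ i → ∀ (lk : Fin (L k)),
      α i li j + α k lk i - (if k = j then 0 else α k lk j) ≤ α i li i)
    (M : Finset (Fin K)) (hM : M.Nonempty)
    (k : Fin K) (hk : k ∉ M)
    (lsel : (i : Fin K) → Fin (L i)) :
    fOrder L α (idOrder L) M lsel ≤ fOrder L α (idOrder L) (insert k M) lsel := by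
  have hw : TINConvex (userWeight L α (idOrder L) lsel) :=
    fun i j hji k' hki => hC2 i (lsel i) j hji k' hki (lsel k')
  obtain ⟨m, hm⟩ := Nat.exists_eq_add_one.mpr (card_pos.mpr hM)
  have hcard : (insert k M).card = m + 2 := by rw [card_insert_of_notMem hk, hm]
  refine le_fOrder_of_forall_le L α _ lsel (by omega) fun n c hn hc hcM => ?_
  obtain rfl : n = m + 2 := hn.trans hcard
  have hkc : k ∈ Set.range c := by
    obtain ⟨j, -, hj⟩ := surj_on_of_inj_on_of_card_le (s := univ) (fun j _ => c j)
      (fun j _ => hcM j) (fun _ _ _ _ h => hc h) (by simp [hcard]) k (mem_insert_self k M)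
    exact ⟨j, hj.symm⟩
  obtain ⟨c', hc', hrange, hcyc⟩ := exists_cycSum_eq_cycSum_snoc _ c hc hkc
  have hc'M : ∀ j, c' j ∈ M := fun j => by
    obtain ⟨⟨i, hi⟩, hne⟩ := hrange ⟨j, rfl⟩
    exact (mem_insert.mp (hi ▸ hcM i)).resolve_left hne
  rw [hcyc]
  exact fOrder_le_cycSum_snoc L α _ lsel hw hk hm c' hc' hc'M

/-- **Lemma 5 (Section 5, Step 3 of the convexity proof).**
Assume (C2). For every nonempty proper set of cells `M`, every cell `k ∉ M`, and every
choice of user indices, `f_id(M,(l_i)_{i∈M}) ≤ f_id(M ∪ {k},(l_i)_{i∈M∪{k}})`. -/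
theorem fOrder_id_le_insert {K : ℕ} (hK : 1 ≤ K)
    (L : Fin K → ℕ) (hL : ∀ k, 1 ≤ L k)
    (α : (k : Fin K) → Fin (L k) → Fin K → ℝ)
    (hα : ∀ (k : Fin K) (l : Fin (L k)) (i : Fin K), 0 ≤ α k l i)
    (hmono : ∀ k : Fin K, Monotone (fun l : Fin (L k) => α k l k))
    (hC2 : ∀ (i : Fin K) (li : Fin (L i)) (j : Fin K), j ≠ i →
      ∀ (k : Fin K), k ≠ i → ∀ (lk : Fin (L k)),
      α i li j + α k lk i - (if k = j then 0 else α k lk j) ≤ α i li i)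
    (M : Finset (Fin K)) (hM : M.Nonempty)
    (k : Fin K) (hk : k ∉ M)
    (lsel : (i : Fin K) → Fin (L i)) :
    fOrder L α (idOrder L) M lsel ≤ fOrder L α (idOrder L) (insert k M) lsel :=
  fOrder_id_le_insert_general L α hC2 M hM k hk lsel
end
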